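/- Let B be an infinite Blaschke product whose zero sequence (a_n) is uniformly discrete. For α > -1 and p > 0 there is a constant C > 0 (depending only on α, p and the separation constant δ) such that ∑_n (1-|a_n|)^{2-p+α} ≤ C·∬_U ((1-|B(z)|)/(1-|z|))^p (1-|z|)^α dA(z). -/

import Mathlib

/-!
Attach to each zero `aₙ` the Euclidean disc of radius `c (1 - |aₙ|)`, with `c = min δ 1 / 5`.
On it `1 - |z|` is comparable to `1 - |aₙ|` and `ρ(z, aₙ) ≤ c`, and since every Blaschke factor
has modulus at most one, `|B(z)| ≤ ρ(z, aₙ) ≤ 1/2` there. Hence the integrand is at least a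
constant times `(1 - |aₙ|)^(α - p)` on a disc of area `π c² (1 - |aₙ|)²`. Separation makes these
discs pairwise disjoint, so summing over `n` bounds the sum by the integral over the unit disc.
-/

open Complex MeasureTheory

noncomputable section

/-- The open unit disc in ℂ. -/
def unitDisc : Set ℂ := {z : ℂ | ‖z‖ < 1}

/-- A single Blaschke factor with zero `a`. -/
def bFactor (a z : ℂ) : ℂ :=
  ((starRingEnd ℂ) a / (‖a‖ : ℂ)) * ((a - z) / (1 - (starRingEnd ℂ) a * z))

/-- The Blaschke product with zeros `a n`. -/
def blaschke (a : ℕ → ℂ) (z : ℂ) : ℂ := ∏' n, bFactor (a n) z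

/-- The pseudohyperbolic distance on the unit disc. -/
def pdist (z w : ℂ) : ℝ := ‖(z - w) / (1 - (starRingEnd ℂ) w * z)‖

/-- The weighted Bergman integral `∬_U |g(z)|^p (1-|z|)^α dA(z)`;
`g ∈ A^p_α` means this is finite. -/
def bergman (g : ℂ → ℂ) (p α : ℝ) : ENNReal :=
  ∫⁻ z in unitDisc, ENNReal.ofReal (‖g z‖ ^ p * (1 - ‖z‖) ^ α)
open ComplexConjugate

lemma one_sub_norm_mul_norm_le_norm_one_sub_conj_mul (a z : ℂ) :
    1 - ‖a‖ * ‖z‖ ≤ ‖1 - conj a * z‖ := by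
  simpa [norm_mul] using norm_sub_norm_le (1 : ℂ) (conj a * z)

lemma normSq_one_sub_conj_mul_sub_normSq_sub (a z : ℂ) :
    normSq (1 - conj a * z) - normSq (z - a) = (1 - normSq a) * (1 - normSq z) := by
  simp only [normSq_apply, sub_re, sub_im, mul_re, mul_im, one_re, one_im, conj_re, conj_im]
  ring

lemma pdist_lt_one {z a : ℂ} (hz : ‖z‖ < 1) (ha : ‖a‖ < 1) : pdist z a < 1 := by
  have hden : 0 < ‖1 - conj a * z‖ :=
    (by nlinarith [norm_nonneg a, norm_nonneg z] : 0 < 1 - ‖a‖ * ‖z‖).trans_le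
      (one_sub_norm_mul_norm_le_norm_one_sub_conj_mul a z)
  have hsq : ‖z - a‖ ^ 2 < ‖1 - conj a * z‖ ^ 2 := by
    have := normSq_one_sub_conj_mul_sub_normSq_sub a z
    simp only [normSq_eq_norm_sq] at this
    have : 0 < (1 - ‖a‖ ^ 2) * (1 - ‖z‖ ^ 2) :=
      mul_pos (by nlinarith [norm_nonneg a]) (by nlinarith [norm_nonneg z])
    linarith
  rw [pdist, norm_div, div_lt_one hden]
  exact lt_of_pow_lt_pow_left₀ 2 (norm_nonneg _) hsq

lemma pdist_le_norm_sub_div {z a : ℂ} (hz : ‖z‖ ≤ 1) (ha : ‖a‖ < 1) :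
    pdist z a ≤ ‖z - a‖ / (1 - ‖a‖) := by
  have hden : 1 - ‖a‖ ≤ ‖1 - conj a * z‖ := by
    nlinarith [one_sub_norm_mul_norm_le_norm_one_sub_conj_mul a z, norm_nonneg a]
  rw [pdist, norm_div]
  exact div_le_div_of_nonneg_left (norm_nonneg _) (by linarith) hden

lemma norm_bFactor {a : ℂ} (ha : a ≠ 0) (z : ℂ) : ‖bFactor a z‖ = pdist z a := by
  have ha' : ‖a‖ ≠ 0 := norm_ne_zero_iff.mpr ha
  rw [bFactor, pdist, norm_mul, norm_div, norm_conj, norm_real, Real.norm_of_nonneg (norm_nonneg a),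
    div_self ha', one_mul, norm_div, norm_div, norm_sub_rev a z]

lemma bFactor_sub_one {a z : ℂ} (ha : a ≠ 0) (hden : 1 - conj a * z ≠ 0) :
    bFactor a z - 1 = -((1 - ‖a‖) * (‖a‖ + conj a * z)) / (‖a‖ * (1 - conj a * z)) := by
  have ha' : (‖a‖ : ℂ) ≠ 0 := by simpa using ha
  have hconj : conj a * a = (‖a‖ : ℂ) ^ 2 := by
    rw [mul_comm, mul_conj, normSq_eq_norm_sq]; push_cast; ring
  rw [bFactor]
  field_simp
  linear_combination hconj

lemma norm_bFactor_sub_one_le {a z : ℂ} (ha0 : a ≠ 0) (ha : ‖a‖ < 1) (hz : ‖z‖ < 1) :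
    ‖bFactor a z - 1‖ ≤ 2 / (1 - ‖z‖) * (1 - ‖a‖) := by
  have hz' : 0 < 1 - ‖z‖ := by linarith
  have hna : 0 < ‖a‖ := norm_pos_iff.mpr ha0
  have hden : 1 - ‖z‖ ≤ ‖1 - conj a * z‖ := by
    nlinarith [one_sub_norm_mul_norm_le_norm_one_sub_conj_mul a z, norm_nonneg z]
  have hden' : 0 < ‖1 - conj a * z‖ := hz'.trans_le hden
  have hnum : ‖(‖a‖ : ℂ) + conj a * z‖ ≤ 2 * ‖a‖ := by
    refine (norm_add_le _ _).trans ?_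
    rw [norm_real, Real.norm_of_nonneg hna.le, norm_mul, norm_conj]
    nlinarith
  have h1a : ‖(1 : ℂ) - ‖a‖‖ = 1 - ‖a‖ := by
    rw [← ofReal_one, ← ofReal_sub, norm_real, Real.norm_of_nonneg (by linarith)]
  rw [bFactor_sub_one ha0 (norm_pos_iff.mp hden'), norm_div, norm_neg, norm_mul,
    norm_mul, h1a, norm_real, Real.norm_of_nonneg hna.le, div_le_iff₀ (mul_pos hna hden'),
    div_mul_eq_mul_div, div_mul_eq_mul_div, le_div_iff₀ hz']
  calc (1 - ‖a‖) * ‖(‖a‖ : ℂ) + conj a * z‖ * (1 - ‖z‖)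
      ≤ (1 - ‖a‖) * (2 * ‖a‖) * ‖1 - conj a * z‖ := by gcongr
    _ = 2 * (1 - ‖a‖) * (‖a‖ * ‖1 - conj a * z‖) := by ring

lemma norm_tprod_le_norm_of_norm_le_one {ι R : Type*} [SeminormedCommRing R] [NormMulClass R]
    [NormOneClass R] {f : ι → R} (hf : Multipliable f) (h : ∀ i, ‖f i‖ ≤ 1) (i₀ : ι) :
    ‖∏' i, f i‖ ≤ ‖f i₀‖ := by
  classical
  refine le_of_tendsto hf.hasProd.norm ?_
  filter_upwards [Filter.eventually_ge_atTop {i₀}] with s hs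
  rw [← Finset.mul_prod_erase s _ (hs (Finset.mem_singleton_self i₀))]
  exact mul_le_of_le_one_right (norm_nonneg _)
    (Finset.prod_le_one (fun _ _ ↦ norm_nonneg _) fun i _ ↦ h i)

section Blaschke

variable {a : ℕ → ℂ} {z : ℂ}

lemma multipliable_bFactor (ha0 : ∀ n, a n ≠ 0) (ha1 : ∀ n, ‖a n‖ < 1)
    (hsum : Summable fun n ↦ 1 - ‖a n‖) (hz : ‖z‖ < 1) :
    Multipliable fun n ↦ bFactor (a n) z := by
  have hs : Summable fun n ↦ ‖bFactor (a n) z - 1‖ :=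
    (hsum.mul_left _).of_nonneg_of_le (fun _ ↦ norm_nonneg _)
      fun n ↦ norm_bFactor_sub_one_le (ha0 n) (ha1 n) hz
  simpa using multipliable_one_add_of_summable hs

lemma norm_blaschke_le_pdist (ha0 : ∀ n, a n ≠ 0) (ha1 : ∀ n, ‖a n‖ < 1)
    (hsum : Summable fun n ↦ 1 - ‖a n‖) (hz : ‖z‖ < 1) (n : ℕ) :
    ‖blaschke a z‖ ≤ pdist z (a n) := by
  have hle : ∀ k, ‖bFactor (a k) z‖ ≤ 1 := fun k ↦ by
    rw [norm_bFactor (ha0 k)]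
    exact (pdist_lt_one hz (ha1 k)).le
  simpa [blaschke, norm_bFactor (ha0 n)] using
    norm_tprod_le_norm_of_norm_le_one (multipliable_bFactor ha0 ha1 hsum hz) hle n

end Blaschke

def whitneyDisc (c : ℝ) (a : ℂ) : Set ℂ := Metric.ball a (c * (1 - ‖a‖))

section WhitneyDisc

variable {c : ℝ} {a z : ℂ}

lemma one_sub_norm_mem_of_mem_whitneyDisc (hc : c ≤ 1 / 2) (ha : ‖a‖ < 1)
    (hz : z ∈ whitneyDisc c a) :
    (1 - ‖a‖) / 2 ≤ 1 - ‖z‖ ∧ 1 - ‖z‖ ≤ 2 * (1 - ‖a‖) := by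
  rw [whitneyDisc, Metric.mem_ball, dist_eq_norm] at hz
  have hnorm := abs_le.mp (abs_norm_sub_norm_le z a)
  constructor <;> nlinarith

lemma whitneyDisc_subset_unitDisc (hc : c ≤ 1 / 2) (ha : ‖a‖ < 1) :
    whitneyDisc c a ⊆ unitDisc := fun z hz ↦ by
  have := (one_sub_norm_mem_of_mem_whitneyDisc hc ha hz).1
  show ‖z‖ < 1
  linarith

lemma pdist_le_of_mem_whitneyDisc (hc : c ≤ 1 / 2) (ha : ‖a‖ < 1)
    (hz : z ∈ whitneyDisc c a) : pdist z a ≤ c := by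
  have hz1 : ‖z‖ < 1 := whitneyDisc_subset_unitDisc hc ha hz
  rw [whitneyDisc, Metric.mem_ball, dist_eq_norm] at hz
  refine (pdist_le_norm_sub_div hz1.le ha).trans ?_
  rw [div_le_iff₀ (by linarith)]
  exact hz.le

lemma disjoint_whitneyDisc {b : ℂ} (hc : c ≤ 1 / 2) (ha : ‖a‖ < 1) (hb : ‖b‖ < 1)
    (hab : 5 * c ≤ pdist a b) : Disjoint (whitneyDisc c a) (whitneyDisc c b) := by
  refine Set.disjoint_left.mpr fun z hza hzb ↦ ?_
  have hta := one_sub_norm_mem_of_mem_whitneyDisc hc ha hza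
  have htb := one_sub_norm_mem_of_mem_whitneyDisc hc hb hzb
  rw [whitneyDisc, Metric.mem_ball, dist_eq_norm] at hza hzb
  have hsub : ‖a - b‖ < 5 * c * (1 - ‖b‖) := calc
    ‖a - b‖ ≤ ‖z - a‖ + ‖z - b‖ := by
      simpa only [norm_sub_rev a z] using norm_sub_le_norm_sub_add_norm_sub a z b
    _ < c * (1 - ‖a‖) + c * (1 - ‖b‖) := add_lt_add hza hzb
    _ ≤ 5 * c * (1 - ‖b‖) := by nlinarith [norm_nonneg (z - a)]
  have hpd : pdist a b < 5 * c := by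
    refine (pdist_le_norm_sub_div ha.le hb).trans_lt ?_
    rwa [div_lt_iff₀ (by linarith)]
  linarith

end WhitneyDisc

lemma norm_blaschke_le_of_mem_whitneyDisc {a : ℕ → ℂ} {c : ℝ} {z : ℂ} (ha0 : ∀ n, a n ≠ 0)
    (ha1 : ∀ n, ‖a n‖ < 1) (hsum : Summable fun n ↦ 1 - ‖a n‖) (hc : c ≤ 1 / 2) {n : ℕ}
    (hz : z ∈ whitneyDisc c (a n)) : ‖blaschke a z‖ ≤ c :=
  (norm_blaschke_le_pdist ha0 ha1 hsum (whitneyDisc_subset_unitDisc hc (ha1 n) hz) n).trans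
    (pdist_le_of_mem_whitneyDisc hc (ha1 n) hz)

lemma two_rpow_neg_abs_mul_rpow_le {s t : ℝ} (β : ℝ) (ht : 0 < t) (hts : t / 2 ≤ s)
    (hst : s ≤ 2 * t) : 2 ^ (-|β|) * t ^ β ≤ s ^ β := by
  rcases le_or_gt 0 β with hβ | hβ
  · calc 2 ^ (-|β|) * t ^ β = (t / 2) ^ β := by
          rw [abs_of_nonneg hβ, Real.rpow_neg zero_le_two, Real.div_rpow ht.le zero_le_two,
            inv_mul_eq_div]
      _ ≤ s ^ β := Real.rpow_le_rpow (by positivity) hts hβ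
  · calc 2 ^ (-|β|) * t ^ β = (2 * t) ^ β := by
          rw [abs_of_neg hβ, neg_neg, Real.mul_rpow zero_le_two ht.le]
      _ ≤ s ^ β := Real.rpow_le_rpow_of_nonpos (by linarith) hst hβ.le

lemma setLIntegral_whitneyDisc_ge {c p : ℝ} (α : ℝ) {a : ℂ} {B : ℂ → ℂ} (hc0 : 0 < c)
    (hc : c ≤ 1 / 2) (hp : 0 < p) (ha : ‖a‖ < 1)
    (hB : ∀ z ∈ whitneyDisc c a, ‖B z‖ ≤ 1 / 2) :
    ENNReal.ofReal ((1 / 2) ^ p * 2 ^ (-|α - p|) * (c ^ 2 * Real.pi) * (1 - ‖a‖) ^ (2 - p + α)) ≤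
      ∫⁻ z in whitneyDisc c a,
        ENNReal.ofReal (((1 - ‖B z‖) / (1 - ‖z‖)) ^ p * (1 - ‖z‖) ^ α) := by
  set t := 1 - ‖a‖
  have ht : 0 < t := sub_pos.mpr ha
  have hpoint : ∀ z ∈ whitneyDisc c a, (1 / 2) ^ p * (2 ^ (-|α - p|) * t ^ (α - p)) ≤
      ((1 - ‖B z‖) / (1 - ‖z‖)) ^ p * (1 - ‖z‖) ^ α := fun z hz ↦ by
    obtain ⟨hts, hst⟩ := one_sub_norm_mem_of_mem_whitneyDisc hc ha hz
    have hs : 0 < 1 - ‖z‖ := by linarith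
    calc (1 / 2) ^ p * (2 ^ (-|α - p|) * t ^ (α - p))
        ≤ (1 / 2) ^ p * (1 - ‖z‖) ^ (α - p) := by
          gcongr; exact two_rpow_neg_abs_mul_rpow_le _ ht hts hst
      _ = ((1 / 2) / (1 - ‖z‖)) ^ p * (1 - ‖z‖) ^ α := by
          rw [Real.div_rpow (by norm_num) hs.le, Real.rpow_sub hs]; ring
      _ ≤ ((1 - ‖B z‖) / (1 - ‖z‖)) ^ p * (1 - ‖z‖) ^ α := by
          gcongr; linarith [hB z hz]
  have hvol : volume (whitneyDisc c a) = ENNReal.ofReal ((c * t) ^ 2 * Real.pi) := by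
    rw [whitneyDisc, Complex.volume_ball, ← ENNReal.ofReal_pow (by positivity),
      ← ENNReal.ofReal_coe_nnreal, NNReal.coe_real_pi, ← ENNReal.ofReal_mul (by positivity)]
  have hpow : t ^ (2 - p + α) = t ^ (α - p) * t ^ 2 := by
    rw [← Real.rpow_natCast, ← Real.rpow_add ht]; ring_nf
  calc ENNReal.ofReal ((1 / 2) ^ p * 2 ^ (-|α - p|) * (c ^ 2 * Real.pi) * t ^ (2 - p + α))
      = ∫⁻ _ in whitneyDisc c a, ENNReal.ofReal ((1 / 2) ^ p * (2 ^ (-|α - p|) * t ^ (α - p))) := by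
        rw [setLIntegral_const, hvol, ← ENNReal.ofReal_mul (by positivity), hpow]; ring_nf
    _ ≤ _ := setLIntegral_mono' measurableSet_ball fun z hz ↦ ENNReal.ofReal_le_ofReal (hpoint z hz)

lemma tsum_setLIntegral_le_of_pairwise_disjoint {X ι : Type*} [MeasurableSpace X] [Countable ι]
    {μ : Measure X} {s : ι → Set X} {t : Set X} (f : X → ENNReal) (hs : ∀ i, MeasurableSet (s i))
    (hd : Pairwise (Function.onFun Disjoint s)) (hst : ∀ i, s i ⊆ t) :
    ∑' i, ∫⁻ x in s i, f x ∂μ ≤ ∫⁻ x in t, f x ∂μ := by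
  rw [← lintegral_iUnion hs hd]
  exact lintegral_mono_set (Set.iUnion_subset hst)

theorem stmt13_general (α p δ : ℝ) (hp : 0 < p) (hδ : 0 < δ) :
    ∃ C > (0 : ℝ), ∀ (a : ℕ → ℂ) (B : ℂ → ℂ),
      (∀ n, 0 < ‖a n‖ ∧ ‖a n‖ < 1) →
      Summable (fun n => 1 - ‖a n‖) →
      (∀ m n, m ≠ n → δ ≤ pdist (a m) (a n)) →
      (∀ z ∈ unitDisc, B z = blaschke a z) →
      ∑' n, ENNReal.ofReal ((1 - ‖a n‖) ^ (2 - p + α)) ≤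
        ENNReal.ofReal C * ∫⁻ z in unitDisc,
          ENNReal.ofReal (((1 - ‖B z‖) / (1 - ‖z‖)) ^ p *
            (1 - ‖z‖) ^ α) := by
  obtain ⟨c, hc0, hc, hcδ⟩ : ∃ c : ℝ, 0 < c ∧ c ≤ 1 / 2 ∧ 5 * c ≤ δ :=
    ⟨min δ 1 / 5, by positivity, by linarith [min_le_right δ 1], by linarith [min_le_left δ 1]⟩
  set K := (1 / 2) ^ p * 2 ^ (-|α - p|) * (c ^ 2 * Real.pi)
  have hK : 0 < K := by positivity
  refine ⟨K⁻¹, inv_pos.mpr hK, fun a B ha hsum hsep hB ↦ ?_⟩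
  have ha0 n : a n ≠ 0 := norm_pos_iff.mp (ha n).1
  have ha1 n : ‖a n‖ < 1 := (ha n).2
  set F : ℂ → ENNReal := fun z ↦ ENNReal.ofReal (((1 - ‖B z‖) / (1 - ‖z‖)) ^ p * (1 - ‖z‖) ^ α)
  have hB_small n : ∀ z ∈ whitneyDisc c (a n), ‖B z‖ ≤ 1 / 2 := fun z hz ↦ by
    rw [hB z (whitneyDisc_subset_unitDisc hc (ha1 n) hz)]
    exact (norm_blaschke_le_of_mem_whitneyDisc ha0 ha1 hsum hc hz).trans hc
  have hterm n : ENNReal.ofReal ((1 - ‖a n‖) ^ (2 - p + α)) ≤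
      ENNReal.ofReal K⁻¹ * ∫⁻ z in whitneyDisc c (a n), F z := by
    rw [← inv_mul_cancel_left₀ hK.ne' ((1 - ‖a n‖) ^ (2 - p + α)),
      ENNReal.ofReal_mul (inv_pos.mpr hK).le]
    gcongr
    exact setLIntegral_whitneyDisc_ge α hc0 hc hp (ha1 n) (hB_small n)
  have hdisj : Pairwise (Function.onFun Disjoint fun n ↦ whitneyDisc c (a n)) := fun m n hmn ↦
    disjoint_whitneyDisc hc (ha1 m) (ha1 n) (hcδ.trans (hsep m n hmn))
  calc ∑' n, ENNReal.ofReal ((1 - ‖a n‖) ^ (2 - p + α))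
      ≤ ENNReal.ofReal K⁻¹ * ∑' n, ∫⁻ z in whitneyDisc c (a n), F z := by
        rw [← ENNReal.tsum_mul_left]; exact ENNReal.tsum_le_tsum hterm
    _ ≤ ENNReal.ofReal K⁻¹ * ∫⁻ z in unitDisc, F z := by
        gcongr
        exact tsum_setLIntegral_le_of_pairwise_disjoint F (fun _ ↦ measurableSet_ball) hdisj
          fun n ↦ whitneyDisc_subset_unitDisc hc (ha1 n)

/-- The key estimate in Theorem 1 (Protas): for uniformly discrete zeros with separation
constant `δ`, `∑ (1-|a_n|)^(2-p+α) ≲ ∬_U ((1-|B|)/(1-|z|))^p (1-|z|)^α dA`, with a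
constant depending only on `α`, `p`, and `δ`. -/
theorem stmt13 (α p δ : ℝ) (hα : -1 < α) (hp : 0 < p) (hδ : 0 < δ) :
    ∃ C > (0 : ℝ), ∀ (a : ℕ → ℂ) (B : ℂ → ℂ),
      (∀ n, 0 < ‖a n‖ ∧ ‖a n‖ < 1) →
      Summable (fun n => 1 - ‖a n‖) →
      (∀ m n, m ≠ n → δ ≤ pdist (a m) (a n)) →
      (∀ z ∈ unitDisc, B z = blaschke a z) →
      ∑' n, ENNReal.ofReal ((1 - ‖a n‖) ^ (2 - p + α)) ≤
        ENNReal.ofReal C * ∫⁻ z in unitDisc,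
          ENNReal.ofReal (((1 - ‖B z‖) / (1 - ‖z‖)) ^ p *
            (1 - ‖z‖) ^ α) :=
  stmt13_general α p δ hp hδ
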